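/- (Example 1, stable manifold formula.) Let 0 < p < 1 and let A be the 3×3 matrix with rows (−1,0,0), (0,2,1), (0,0,2), i.e. block diagonal with the 1×1 stable block (−1) and the unstable Jordan block J_2(2); let f(x₁,x₂,x₃) := (0, x₁², 3x₁²); let π_s(x₁,x₂,x₃) = (x₁,0,0) and π_u(x₁,x₂,x₃) = (0,x₂,x₃). Let σ = (σ₁,0,0) and let x : [0,∞) → ℂ³ be a bounded continuous fixed point of T_σ (with the integrand τ ↦ (p/τ) B̃(−τ) π_u f(x(τ)) Bochner integrable on (0,∞)). Then x₁(t) = E_p(−t^p) σ₁ for all t ≥ 0, and the third coordinate at time 0 satisfies x₃(0) = −3 · 2^{1/p − 1} · σ₁² · ∫_0^∞ e^{−2^{1/p} τ} E_p(−τ^p)² dτ. -/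

import Mathlib

open MeasureTheory

noncomputable def mlE (p β : ℝ) (z : ℂ) : ℂ :=
  ∑' k : ℕ, z ^ k / Complex.Gamma ((p * k + β : ℝ) : ℂ)

noncomputable def psiT (p : ℝ) (m : ℕ) (t : ℝ) (lam : ℂ) : ℂ :=
  (1 / (m.factorial : ℂ)) *
    iteratedDeriv (m + 1) (fun z : ℂ => Complex.exp ((t : ℂ) * z ^ (1 / (p : ℂ)))) lam

noncomputable def mlEM {ι : Type*} [Fintype ι] [DecidableEq ι] (p β : ℝ) (M : Matrix ι ι ℂ) :
    Matrix ι ι ℂ :=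
  ∑' k : ℕ, (Complex.Gamma ((p * k + β : ℝ) : ℂ))⁻¹ • M ^ k

noncomputable def mvE {ι : Type*} [Fintype ι] [DecidableEq ι] (M : Matrix ι ι ℂ)
    (v : EuclideanSpace ℂ ι) : EuclideanSpace ℂ ι :=
  Matrix.toEuclideanLin M v

def BC {E : Type*} [NormedAddCommGroup E] (x : ℝ → E) : Prop :=
  ContinuousOn x (Set.Ici 0) ∧ ∃ C, ∀ t : ℝ, 0 ≤ t → ‖x t‖ ≤ C

/-- the matrix of Example 1: one stable block `(-1)`, one unstable Jordan block `J₂(2)`. -/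
noncomputable def A18 : Matrix (Fin 3) (Fin 3) ℂ := !![-1, 0, 0; 0, 2, 1; 0, 0, 2]

/-- the block matrix `B̃(t)` of Example 1. -/
noncomputable def Bt18 (p : ℝ) (t : ℝ) : Matrix (Fin 3) (Fin 3) ℂ :=
  !![0, 0, 0; 0, psiT p 0 t 2, psiT p 1 t 2; 0, 0, psiT p 0 t 2]

/-- the nonlinearity `f(x₁,x₂,x₃) = (0, x₁², 3x₁²)` of Example 1. -/
noncomputable def f18 (v : EuclideanSpace ℂ (Fin 3)) : EuclideanSpace ℂ (Fin 3) :=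
  (WithLp.equiv 2 (Fin 3 → ℂ)).symm ![0, v 0 ^ 2, 3 * v 0 ^ 2]

/-- the unstable projection `π_u(x₁,x₂,x₃) = (0,x₂,x₃)`. -/
noncomputable def piu18 (v : EuclideanSpace ℂ (Fin 3)) : EuclideanSpace ℂ (Fin 3) :=
  (WithLp.equiv 2 (Fin 3 → ℂ)).symm ![0, v 1, v 2]

/-- the operator `T_σ` of Example 1. -/
noncomputable def T18 (p : ℝ) (σ : EuclideanSpace ℂ (Fin 3)) (x : ℝ → EuclideanSpace ℂ (Fin 3))
    (t : ℝ) : EuclideanSpace ℂ (Fin 3) :=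
  mvE (mlEM p 1 (((t ^ p : ℝ) : ℂ) • A18)) σ
    + mvE (mlEM p 1 (((t ^ p : ℝ) : ℂ) • A18))
        (∫ τ in Set.Ioi (0 : ℝ), (p / τ) • mvE (Bt18 p (-τ)) (piu18 (f18 (x τ))))
    + ∫ τ in Set.Ioc (0 : ℝ) t,
        ((t - τ) ^ (p - 1)) • mvE (mlEM p p ((((t - τ) ^ p : ℝ) : ℂ) • A18)) (f18 (x τ))

/-!
The Mittag-Leffler matrix series converge by the ratio test, since log-convexity of `Γ` gives
`Γ(X + p) ≥ Γ(X) (X - 1)^p`. As the first row of `A` is `(-1, 0, 0)`, the first row of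
`E_{p,β}(cA)` is `(E_{p,β}(-c), 0, 0)`; since moreover `B̃` has zero first row and `f` has zero
first coordinate, the first coordinate of `T_σ x` is `E_p(-t^p) σ₁` whatever `x` is. At `t = 0`
the Mittag-Leffler matrix is the identity and the convolution term vanishes, so `x₃(0)` is the
third coordinate of the `B̃`-integral, `∫ (p/τ) Ψ̃₀(-τ, 2) · 3 x₁(τ)² dτ`, and
`Ψ̃₀(t, λ) = (t/p) λ^{1/p-1} exp(t λ^{1/p})` turns this into the stated formula.
-/

/-- Log-convexity of `Γ`: the slope of `log ∘ Γ` on `[X - 1, X]` is `log (X - 1)` and is at most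
its slope on `[X, X + p]`. -/
lemma Real.Gamma_mul_rpow_le_Gamma_add {p X : ℝ} (hp : 0 < p) (hX : 1 < X) :
    Real.Gamma X * (X - 1) ^ p ≤ Real.Gamma (X + p) := by
  have h1 : 0 < X - 1 := by linarith
  have hslope := Real.convexOn_log_Gamma.slope_mono_adjacent
    (Set.mem_Ioi.2 h1) (Set.mem_Ioi.2 (by linarith : 0 < X + p)) (by linarith : X - 1 < X)
    (by linarith : X < X + p)
  have hGamma : Real.Gamma X = (X - 1) * Real.Gamma (X - 1) := by
    simpa using Real.Gamma_add_one h1.ne'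
  have hlog : Real.log (Real.Gamma X) - Real.log (Real.Gamma (X - 1)) = Real.log (X - 1) := by
    rw [hGamma, Real.log_mul h1.ne' (Real.Gamma_pos_of_pos h1).ne']; ring
  simp only [Function.comp_apply, sub_sub_cancel, div_one, add_sub_cancel_left, hlog] at hslope
  rw [le_div_iff₀ hp] at hslope
  rw [← Real.log_le_log_iff (by positivity [Real.Gamma_pos_of_pos (by linarith : 0 < X)])
    (Real.Gamma_pos_of_pos (by linarith)), Real.log_mul (Real.Gamma_pos_of_pos (by linarith)).ne'
    (by positivity), Real.log_rpow h1]
  linarith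

lemma Real.summable_pow_div_Gamma_mul_add {p β : ℝ} (hp : 0 < p) (hβ : 0 < β) (r : ℝ) :
    Summable (fun k : ℕ => r ^ k / Real.Gamma (p * k + β)) := by
  refine summable_of_ratio_norm_eventually_le (r := 1 / 2) (by norm_num) ?_
  have hlin : Filter.Tendsto (fun k : ℕ => p * k + β) Filter.atTop Filter.atTop :=
    Filter.tendsto_atTop_add_const_right _ _
      ((tendsto_natCast_atTop_atTop (R := ℝ)).const_mul_atTop hp)
  have hpow : Filter.Tendsto (fun k : ℕ => (p * k + β - 1) ^ p) Filter.atTop Filter.atTop :=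
    (tendsto_rpow_atTop hp).comp (Filter.tendsto_atTop_add_const_right _ (-1) hlin)
  filter_upwards [hlin.eventually_gt_atTop 1, hpow.eventually_ge_atTop (2 * |r|)]
    with k hX hgrowth
  set X := p * k + β
  have hΓX : 0 < Real.Gamma X := Real.Gamma_pos_of_pos (by linarith)
  have hΓXp : 0 < Real.Gamma (X + p) := Real.Gamma_pos_of_pos (by linarith)
  have hΓ : Real.Gamma X * (2 * |r|) ≤ Real.Gamma (X + p) :=
    (mul_le_mul_of_nonneg_left hgrowth hΓX.le).trans (Real.Gamma_mul_rpow_le_Gamma_add hp hX)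
  have hshift : p * ((k + 1 : ℕ) : ℝ) + β = X + p := by push_cast; ring
  rw [hshift, norm_div, norm_div, norm_pow, norm_pow, Real.norm_of_nonneg hΓX.le,
    Real.norm_of_nonneg hΓXp.le, Real.norm_eq_abs, div_le_iff₀ hΓXp]
  calc |r| ^ (k + 1) = 1 / 2 * (|r| ^ k / Real.Gamma X) * (Real.Gamma X * (2 * |r|)) := by
        field_simp; ring
    _ ≤ 1 / 2 * (|r| ^ k / Real.Gamma X) * Real.Gamma (X + p) := by gcongr

lemma Complex.norm_inv_Gamma_ofReal {x : ℝ} (hx : 0 < x) :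
    ‖(Complex.Gamma (x : ℂ))⁻¹‖ = (Real.Gamma x)⁻¹ := by
  rw [Complex.Gamma_ofReal, norm_inv, Complex.norm_real, Real.norm_of_nonneg
    (Real.Gamma_pos_of_pos hx).le]

section MittagLefflerMatrix

variable {ι : Type*} [Fintype ι] [DecidableEq ι]

lemma summable_mlEM_series {p β : ℝ} (hp : 0 < p) (hβ : 0 < β) (M : Matrix ι ι ℂ) :
    Summable (fun k : ℕ => (Complex.Gamma ((p * k + β : ℝ) : ℂ))⁻¹ • M ^ k) := by
  let := Matrix.linftyOpNormedRing (n := ι) (α := ℂ)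
  let := Matrix.linftyOpNormedAlgebra (n := ι) (R := ℂ) (α := ℂ)
  refine .of_norm_bounded_eventually_nat (Real.summable_pow_div_Gamma_mul_add hp hβ ‖M‖) ?_
  filter_upwards [Filter.eventually_gt_atTop 0] with k hk
  rw [norm_smul, Complex.norm_inv_Gamma_ofReal (by positivity), inv_mul_eq_div]
  gcongr
  exact norm_pow_le' M hk

lemma mlEM_apply {p β : ℝ} (hp : 0 < p) (hβ : 0 < β) (M : Matrix ι ι ℂ) (i j : ι) :
    mlEM p β M i j = ∑' k : ℕ, (Complex.Gamma ((p * k + β : ℝ) : ℂ))⁻¹ * (M ^ k) i j :=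
  (Pi.hasSum.1 (Pi.hasSum.1 (summable_mlEM_series hp hβ M).hasSum i) j).tsum_eq.symm

lemma mlEM_zero (p β : ℝ) :
    mlEM p β (0 : Matrix ι ι ℂ) = (Complex.Gamma β)⁻¹ • 1 := by
  rw [mlEM, tsum_eq_single 0 fun k hk => by rw [zero_pow hk, smul_zero]]
  simp

lemma mvE_apply (M : Matrix ι ι ℂ) (v : EuclideanSpace ℂ ι) (i : ι) :
    mvE M v i = ∑ j, M i j * v j :=
  rfl

end MittagLefflerMatrix

lemma A18_pow_zero_row (k : ℕ) : (A18 ^ k) 0 = ![(-1) ^ k, 0, 0] := by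
  induction k with
  | zero => ext j; fin_cases j <;> rfl
  | succ k ih =>
    ext j
    simp only [pow_succ, Matrix.mul_apply, Fin.sum_univ_three, ih]
    fin_cases j <;> simp [A18]

lemma mlEM_smul_A18_zero_row {p β : ℝ} (hp : 0 < p) (hβ : 0 < β) (c : ℂ) :
    mlEM p β (c • A18) 0 = ![mlE p β (-c), 0, 0] := by
  ext j
  simp only [mlEM_apply hp hβ, smul_pow, Matrix.smul_apply, A18_pow_zero_row, smul_eq_mul]
  fin_cases j
  · refine tsum_congr fun k => ?_
    simp [neg_pow c k, div_eq_inv_mul, mul_comm]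
  all_goals simp

lemma mvE_mlEM_smul_A18_apply_zero {p β : ℝ} (hp : 0 < p) (hβ : 0 < β) (c : ℂ)
    (v : EuclideanSpace ℂ (Fin 3)) :
    mvE (mlEM p β (c • A18)) v 0 = mlE p β (-c) * v 0 := by
  simp [mvE_apply, Fin.sum_univ_three, mlEM_smul_A18_zero_row hp hβ]

lemma EuclideanSpace.integral_apply {𝕜 ι α : Type*} [RCLike 𝕜] [Fintype ι]
    [MeasurableSpace α] {μ : Measure α} {φ : α → EuclideanSpace 𝕜 ι} (hφ : Integrable φ μ)
    (i : ι) : (∫ a, φ a ∂μ) i = ∫ a, φ a i ∂μ :=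
  ((EuclideanSpace.proj i).integral_comp_comm hφ).symm

lemma EuclideanSpace.integral_apply_eq_zero {𝕜 ι α : Type*} [RCLike 𝕜] [Fintype ι]
    [MeasurableSpace α] {μ : Measure α} {φ : α → EuclideanSpace 𝕜 ι} {i : ι}
    (h : ∀ a, φ a i = 0) : (∫ a, φ a ∂μ) i = 0 := by
  by_cases hφ : Integrable φ μ
  · simp [EuclideanSpace.integral_apply hφ, h]
  · rw [integral_undef hφ]
    rfl

lemma psiT_zero_of_mem_slitPlane {lam : ℂ} (hlam : lam ∈ Complex.slitPlane) (p t : ℝ) :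
    psiT p 0 t lam =
      t * (1 / p) * lam ^ (1 / (p : ℂ) - 1) * Complex.exp (t * lam ^ (1 / (p : ℂ))) := by
  have hderiv := (((Complex.hasStrictDerivAt_cpow_const (c := 1 / (p : ℂ)) hlam).hasDerivAt
    ).const_mul (t : ℂ)).cexp
  rw [psiT, iteratedDeriv_one, hderiv.deriv]
  simp only [Nat.factorial_zero, Nat.cast_one, div_one, one_mul]
  ring

lemma div_mul_psiT_zero_neg_two {p τ : ℝ} (hp : p ≠ 0) (hτ : τ ≠ 0) :
    ((p / τ : ℝ) : ℂ) * psiT p 0 (-τ) 2 =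
      -(((2 : ℝ) ^ (1 / p - 1) : ℝ) : ℂ) *
        ((Real.exp (-((2 : ℝ) ^ (1 / p)) * τ) : ℝ) : ℂ) := by
  have hcpow (s : ℝ) : (2 : ℂ) ^ (s : ℂ) = (((2 : ℝ) ^ s : ℝ) : ℂ) := by
    rw [Complex.ofReal_cpow zero_le_two, Complex.ofReal_ofNat]
  rw [psiT_zero_of_mem_slitPlane (by simp), show 1 / (p : ℂ) - 1 = ((1 / p - 1 : ℝ) : ℂ)
    by push_cast; ring, show 1 / (p : ℂ) = ((1 / p : ℝ) : ℂ) by push_cast; ring, hcpow, hcpow]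
  have hp' : (p : ℂ) ≠ 0 := Complex.ofReal_ne_zero.2 hp
  have hτ' : (τ : ℂ) ≠ 0 := Complex.ofReal_ne_zero.2 hτ
  push_cast
  field_simp

lemma T18_apply_zero {p : ℝ} (hp : 0 < p) (σ : EuclideanSpace ℂ (Fin 3))
    (x : ℝ → EuclideanSpace ℂ (Fin 3)) (t : ℝ) :
    T18 p σ x t 0 = mlE p 1 (-((t ^ p : ℝ) : ℂ)) * σ 0 := by
  have hB (τ : ℝ) : ((p / τ) • mvE (Bt18 p (-τ)) (piu18 (f18 (x τ)))) 0 = 0 := by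
    simp [mvE_apply, Fin.sum_univ_three, Bt18]
  have hf (τ : ℝ) : ((t - τ) ^ (p - 1) •
      mvE (mlEM p p ((((t - τ) ^ p : ℝ) : ℂ) • A18)) (f18 (x τ))) 0 = 0 := by
    rw [PiLp.smul_apply, mvE_mlEM_smul_A18_apply_zero hp hp]
    simp [f18]
  simp only [T18, PiLp.add_apply, mvE_mlEM_smul_A18_apply_zero hp one_pos,
    EuclideanSpace.integral_apply_eq_zero hB, EuclideanSpace.integral_apply_eq_zero hf]
  ring

lemma T18_zero_apply_two {p : ℝ} (hp : 0 < p) (σ : EuclideanSpace ℂ (Fin 3))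
    (x : ℝ → EuclideanSpace ℂ (Fin 3))
    (hint : IntegrableOn (fun τ : ℝ => (p / τ) • mvE (Bt18 p (-τ)) (piu18 (f18 (x τ))))
      (Set.Ioi 0)) :
    T18 p σ x 0 2 = σ 2 + ∫ τ in Set.Ioi (0 : ℝ),
      ((p / τ : ℝ) : ℂ) * psiT p 0 (-τ) 2 * (3 * x τ 0 ^ 2) := by
  simp only [T18, Real.zero_rpow hp.ne', Complex.ofReal_zero, zero_smul, mlEM_zero,
    Set.Ioc_self, Measure.restrict_empty, integral_zero_measure, add_zero, PiLp.add_apply,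
    mvE_apply, Fin.sum_univ_three, EuclideanSpace.integral_apply hint]
  simp [Bt18, mvE_apply, Fin.sum_univ_three, piu18, f18, Complex.real_smul, mul_assoc]

theorem stmt_18_general (p : ℝ) (hp0 : 0 < p) (σ₁ : ℂ)
    (x : ℝ → EuclideanSpace ℂ (Fin 3))
    (hint : MeasureTheory.IntegrableOn
      (fun τ : ℝ => (p / τ) • mvE (Bt18 p (-τ)) (piu18 (f18 (x τ)))) (Set.Ioi 0))
    (hfix : ∀ t ≥ (0 : ℝ),
      T18 p ((WithLp.equiv 2 (Fin 3 → ℂ)).symm ![σ₁, 0, 0]) x t = x t) :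
    (∀ t ≥ (0 : ℝ), x t 0 = mlE p 1 (-((t ^ p : ℝ) : ℂ)) * σ₁) ∧
      x 0 2 = -3 * (((2 : ℝ) ^ (1 / p - 1) : ℝ) : ℂ) * σ₁ ^ 2 *
        ∫ τ in Set.Ioi (0 : ℝ),
          ((Real.exp (-((2 : ℝ) ^ (1 / p)) * τ) : ℝ) : ℂ)
            * mlE p 1 (-((τ ^ p : ℝ) : ℂ)) ^ 2 := by
  have hstable (t : ℝ) (ht : 0 ≤ t) : x t 0 = mlE p 1 (-((t ^ p : ℝ) : ℂ)) * σ₁ := by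
    rw [← hfix t ht, T18_apply_zero hp0]
    rfl
  refine ⟨hstable, ?_⟩
  rw [← hfix 0 le_rfl, T18_zero_apply_two hp0 _ _ hint, ← integral_const_mul]
  refine (zero_add _).trans (setIntegral_congr_fun measurableSet_Ioi fun τ (hτ : 0 < τ) => ?_)
  rw [hstable τ hτ.le, div_mul_psiT_zero_neg_two hp0.ne' hτ.ne']
  ring

theorem stmt_18 (p : ℝ) (hp0 : 0 < p) (hp1 : p < 1) (σ₁ : ℂ)
    (x : ℝ → EuclideanSpace ℂ (Fin 3)) (hx : BC x)
    (hint : MeasureTheory.IntegrableOn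
      (fun τ : ℝ => (p / τ) • mvE (Bt18 p (-τ)) (piu18 (f18 (x τ)))) (Set.Ioi 0))
    (hfix : ∀ t ≥ (0 : ℝ),
      T18 p ((WithLp.equiv 2 (Fin 3 → ℂ)).symm ![σ₁, 0, 0]) x t = x t) :
    (∀ t ≥ (0 : ℝ), x t 0 = mlE p 1 (-((t ^ p : ℝ) : ℂ)) * σ₁) ∧
      x 0 2 = -3 * (((2 : ℝ) ^ (1 / p - 1) : ℝ) : ℂ) * σ₁ ^ 2 *
        ∫ τ in Set.Ioi (0 : ℝ),
          ((Real.exp (-((2 : ℝ) ^ (1 / p)) * τ) : ℝ) : ℂ)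
            * mlE p 1 (-((τ ^ p : ℝ) : ℂ)) ^ 2 :=
  stmt_18_general p hp0 σ₁ x hint hfix
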